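/- Uniqueness of weights up to gauge: let N = (V,E) be a directed network on a closed orientable surface with boundary such that every vertex lies on some directed path between boundary vertices. If two weight assignments X = {a_e x_e} and Y = {b_e x_e} (with a_e, b_e ∈ ℝ*) satisfy A(N, X) = A(N, Y), then there exists a gauge group element g ∈ (ℝ*)^{int(V)} with g·X = Y. Combined with gauge invariance, A(N,X) = A(N,Y) holds if and only if X and Y are gauge equivalent. -/

import Mathlib

variable {V E : Type*}

/-- `es` is the edge list of a directed path from `i` to `j`. -/
def IsPath (src tgt : E → V) (es : List E) (i j : V) : Prop :=
  es.map src ++ [j] = i :: es.map tgt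

/-- The list of vertices visited by a path starting at `i` with edge list `es`. -/
def pvisits (tgt : E → V) (i : V) (es : List E) : List V := i :: es.map tgt

/-- The exponent (as a monomial) of the weight of the path with edge list `es`. -/
noncomputable def expOf [DecidableEq E] (es : List E) : E →₀ ℕ :=
  (es.map fun e => Finsupp.single e 1).sum

/-- The `(i,j)` entry of `A(N, {a_e x_e})`: `∑_{P : i ⇝ j} (∏_{e ∈ P} a_e) wt(P)`. -/
noncomputable def wEntry [DecidableEq E] (src tgt : E → V) (c : List E → ℝ) (i j : V) :
    MvPowerSeries E ℝ :=
  fun d => ∑ᶠ es : {es : List E // IsPath src tgt es i j ∧ expOf es = d}, c es.1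

/-!
Equality of the entries of `A(N, X)` and `A(N, Y)` amounts to equality of the weights
`∏ a_e` and `∏ b_e` along every path from a boundary source to a boundary vertex. So the
ratio `w_e = a_e / b_e`, taken in the group `ℝˣ`, has trivial product along all such paths,
and gauge equivalence says exactly that `w` is a coboundary `w_e = g_{tgt e} / g_{src e}` of a
potential `g` equal to `1` on the boundary.
-/

section Paths

variable {src tgt : E → V}

lemma isPath_nil {i j : V} : IsPath src tgt ([] : List E) i j ↔ i = j := by
  simp [IsPath, eq_comm]

lemma isPath_cons {e : E} {es : List E} {i j : V} :
    IsPath src tgt (e :: es) i j ↔ src e = i ∧ IsPath src tgt es (tgt e) j := by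
  simp [IsPath]

lemma isPath_singleton (e : E) : IsPath src tgt [e] (src e) (tgt e) :=
  isPath_cons.2 ⟨rfl, isPath_nil.2 rfl⟩

lemma IsPath.append {es₁ es₂ : List E} {i v j : V} (h₁ : IsPath src tgt es₁ i v)
    (h₂ : IsPath src tgt es₂ v j) : IsPath src tgt (es₁ ++ es₂) i j := by
  induction es₁ generalizing i with
  | nil => rwa [isPath_nil.1 h₁]
  | cons e es ih =>
    rw [isPath_cons] at h₁
    exact isPath_cons.2 ⟨h₁.1, ih h₁.2⟩

lemma IsPath.exists_split {es : List E} {i j v : V} (h : IsPath src tgt es i j)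
    (hv : v ∈ pvisits tgt i es) :
    ∃ es₁ es₂, es = es₁ ++ es₂ ∧ IsPath src tgt es₁ i v ∧ IsPath src tgt es₂ v j := by
  induction es generalizing i with
  | nil =>
    obtain rfl : v = i := by simpa [pvisits] using hv
    exact ⟨[], [], rfl, isPath_nil.2 rfl, h⟩
  | cons e es ih =>
    rw [isPath_cons] at h
    rcases List.mem_cons.1 hv with rfl | hv
    · exact ⟨[], e :: es, rfl, isPath_nil.2 rfl, isPath_cons.2 h⟩
    · obtain ⟨es₁, es₂, rfl, h₁, h₂⟩ := ih h.2 hv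
      exact ⟨e :: es₁, es₂, rfl, isPath_cons.2 ⟨h.1, h₁⟩, h₂⟩

end Paths

section Potential

variable {G : Type*} [CommGroup G] {src tgt : E → V} {w : E → G}

lemma IsPath.prod_map_eq_div {g : V → G} (hw : ∀ e, w e = g (tgt e) / g (src e))
    {es : List E} {i j : V} (h : IsPath src tgt es i j) : (es.map w).prod = g j / g i := by
  induction es generalizing i with
  | nil => simp [isPath_nil.1 h]
  | cons e es ih =>
    obtain ⟨rfl, hes⟩ := isPath_cons.1 h
    rw [List.map_cons, List.prod_cons, ih hes, hw, mul_comm, div_mul_div_cancel]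

/-- The potential of `v` is the holonomy of `w` along any path from `I` to `v`; it is well
defined because each such path extends to one ending in `K`, along which the holonomy is `1`. -/
lemma exists_potential_of_prod_eq_one {I K : Set V}
    (hcover : ∀ v : V, ∃ i ∈ I, ∃ j ∈ K, ∃ es : List E,
      IsPath src tgt es i j ∧ v ∈ pvisits tgt i es)
    (hw : ∀ i ∈ I, ∀ j ∈ K, ∀ es, IsPath src tgt es i j → (es.map w).prod = 1) :
    ∃ g : V → G, (∀ v ∈ K, g v = 1) ∧ ∀ e, w e = g (tgt e) / g (src e) := by
  choose i hi j hj es hes hv using hcover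
  choose p q _ hp hq using fun v => (hes v).exists_split (hv v)
  have hpot : ∀ v, ∀ i' ∈ I, ∀ p', IsPath src tgt p' i' v →
      (p'.map w).prod = ((p v).map w).prod := by
    intro v i' hi' p' hp'
    have h₁ := hw i' hi' (j v) (hj v) _ (hp'.append (hq v))
    have h₂ := hw (i v) (hi v) (j v) (hj v) _ ((hp v).append (hq v))
    rw [List.map_append, List.prod_append, mul_eq_one_iff_eq_inv] at h₁ h₂
    rw [h₁, h₂]
  refine ⟨fun v => ((p v).map w).prod, fun v hv => ?_, fun e => ?_⟩
  · exact hw (i v) (hi v) v hv (p v) (hp v)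
  · show _ = ((p (tgt e)).map w).prod / ((p (src e)).map w).prod
    rw [← hpot (tgt e) _ (hi (src e)) _ ((hp (src e)).append (isPath_singleton e))]
    simp

lemma prod_eq_one_iff_exists_potential {I K : Set V} (hIK : I ⊆ K)
    (hcover : ∀ v : V, ∃ i ∈ I, ∃ j ∈ K, ∃ es : List E,
      IsPath src tgt es i j ∧ v ∈ pvisits tgt i es) :
    (∀ i ∈ I, ∀ j ∈ K, ∀ es, IsPath src tgt es i j → (es.map w).prod = 1) ↔
      ∃ g : V → G, (∀ v ∈ K, g v = 1) ∧ ∀ e, w e = g (tgt e) / g (src e) := by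
  refine ⟨exists_potential_of_prod_eq_one hcover, ?_⟩
  rintro ⟨g, hgK, hg⟩ i hi j hj es hes
  rw [hes.prod_map_eq_div hg, hgK i (hIK hi), hgK j hj, div_one]

lemma prod_map_eq_iff_exists_gauge {I K : Set V} (hIK : I ⊆ K)
    (hcover : ∀ v : V, ∃ i ∈ I, ∃ j ∈ K, ∃ es : List E,
      IsPath src tgt es i j ∧ v ∈ pvisits tgt i es) (a b : E → G) :
    (∀ i ∈ I, ∀ j ∈ K, ∀ es, IsPath src tgt es i j → (es.map a).prod = (es.map b).prod) ↔
      ∃ g : V → G, (∀ v ∈ K, g v = 1) ∧ ∀ e, b e = (g (tgt e))⁻¹ * a e * g (src e) := by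
  have hprod : ∀ es : List E,
      (es.map a).prod = (es.map b).prod ↔ (es.map fun e => a e / b e).prod = 1 := by
    intro es
    have hdiv : (es.map fun e => a e / b e).prod = (es.map a).prod / (es.map b).prod := by
      simpa using Multiset.prod_map_div (m := (es : Multiset E)) (f := a) (g := b)
    rw [hdiv, div_eq_one]
  have hedge : ∀ (g : V → G) e,
      b e = (g (tgt e))⁻¹ * a e * g (src e) ↔ a e / b e = g (tgt e) / g (src e) := by
    intro g e
    rw [mul_assoc, eq_inv_mul_iff_mul_eq, div_eq_div_iff_mul_eq_mul, eq_comm]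
  simp only [hprod, hedge]
  exact prod_eq_one_iff_exists_potential hIK hcover

end Potential

section Coefficients

variable [DecidableEq E] {src tgt : E → V}

lemma expOf_apply (es : List E) (e : E) : expOf es e = es.count e := by
  induction es with
  | nil => simp [expOf]
  | cons x es ih =>
    rw [List.count_cons, ← ih]
    simp [expOf, Finsupp.single_apply, add_comm]

lemma perm_of_expOf_eq {es es' : List E} (h : expOf es = expOf es') : es.Perm es' :=
  List.perm_iff_count.2 fun e => by rw [← expOf_apply, h, expOf_apply]

instance {i j : V} (es : List E) :
    Finite {es' // IsPath src tgt es' i j ∧ expOf es' = expOf es} :=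
  (es.permutations.finite_toSet.subset fun _ hl =>
    List.mem_permutations.2 (perm_of_expOf_eq hl.2)).to_subtype

/-- Paths with the same monomial are permutations of each other, so the coefficient of
`expOf es` in an entry is a finite sum of copies of the weight of `es`. -/
lemma wEntry_apply_expOf {c : List E → ℝ} (hc : ∀ l l' : List E, l.Perm l' → c l = c l')
    {i j : V} (es : List E) :
    wEntry src tgt c i j (expOf es) =
      Nat.card {es' // IsPath src tgt es' i j ∧ expOf es' = expOf es} * c es := by
  have := Fintype.ofFinite {es' // IsPath src tgt es' i j ∧ expOf es' = expOf es}
  have hconst : ∀ l : {es' // IsPath src tgt es' i j ∧ expOf es' = expOf es}, c l.1 = c es :=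
    fun l => hc _ _ (perm_of_expOf_eq l.2.2)
  rw [wEntry, finsum_congr hconst, finsum_eq_sum_of_fintype, Finset.sum_const, Finset.card_univ, Nat.card_eq_fintype_card,
    nsmul_eq_mul]

lemma wEntry_prod_eq_iff {a b : E → ℝ} {i j : V} :
    wEntry src tgt (fun es => (es.map a).prod) i j =
        wEntry src tgt (fun es => (es.map b).prod) i j ↔
      ∀ es, IsPath src tgt es i j → (es.map a).prod = (es.map b).prod := by
  refine ⟨fun h es hes => ?_, fun h => ?_⟩
  · have hcoeff := congrFun h (expOf es)
    rw [wEntry_apply_expOf (fun l l' hl => (hl.map a).prod_eq),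
      wEntry_apply_expOf (fun l l' hl => (hl.map b).prod_eq)] at hcoeff
    have : Nonempty {es' // IsPath src tgt es' i j ∧ expOf es' = expOf es} := ⟨⟨es, hes, rfl⟩⟩
    exact mul_left_cancel₀ (Nat.cast_ne_zero.2 Nat.card_pos.ne') hcoeff
  · funext d
    exact finsum_congr fun l => h l.1 l.2.1

end Coefficients

lemma exists_units_gauge_iff {G₀ : Type*} [GroupWithZero G₀] {src tgt : E → V} (K : Set V)
    {a b : E → G₀} (ha : ∀ e, a e ≠ 0) (hb : ∀ e, b e ≠ 0) :
    (∃ g : V → G₀ˣ, (∀ v ∈ K, g v = 1) ∧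
        ∀ e, Units.mk0 (b e) (hb e) = (g (tgt e))⁻¹ * Units.mk0 (a e) (ha e) * g (src e)) ↔
      ∃ g : V → G₀, (∀ v, g v ≠ 0) ∧ (∀ v ∈ K, g v = 1) ∧
        ∀ e, b e = (g (tgt e))⁻¹ * a e * g (src e) := by
  constructor
  · rintro ⟨g, hgK, hg⟩
    refine ⟨fun v => g v, fun v => (g v).ne_zero, fun v hv => by simp [hgK v hv], fun e => ?_⟩
    simpa using congrArg Units.val (hg e)
  · rintro ⟨g, hg0, hgK, hg⟩
    refine ⟨fun v => Units.mk0 (g v) (hg0 v), fun v hv => by ext; simp [hgK v hv],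
      fun e => by ext; simp [hg e]⟩

/-- Theorem 5.2 of the paper (uniqueness of weights up to gauge): for a directed
network in which every vertex lies on some directed path from a boundary source to a
boundary vertex, two weight assignments `X = {a_e x_e}` and `Y = {b_e x_e}` (with
`a_e, b_e ∈ ℝ*`) satisfy `A(N, X) = A(N, Y)` if and only if they are gauge
equivalent: there is `g : V → ℝ*` with `g = 1` on boundary vertices and
`b_{(u,v)} = g_v⁻¹ a_{(u,v)} g_u` for every edge. -/
theorem gauge_uniqueness [DecidableEq E] (src tgt : E → V)
    (K I : Finset V) (hIK : I ⊆ K)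
    (hcover : ∀ v : V, ∃ i ∈ I, ∃ j ∈ K, ∃ es : List E,
      IsPath src tgt es i j ∧ v ∈ pvisits tgt i es)
    (a b : E → ℝ) (ha : ∀ e, a e ≠ 0) (hb : ∀ e, b e ≠ 0) :
    (∀ i ∈ I, ∀ j ∈ K,
        wEntry src tgt (fun es => (es.map a).prod) i j =
          wEntry src tgt (fun es => (es.map b).prod) i j) ↔
      ∃ g : V → ℝ, (∀ v, g v ≠ 0) ∧ (∀ v ∈ K, g v = 1) ∧
        ∀ e : E, b e = (g (tgt e))⁻¹ * a e * g (src e) := by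
  set a' : E → ℝˣ := fun e => Units.mk0 (a e) (ha e)
  set b' : E → ℝˣ := fun e => Units.mk0 (b e) (hb e)
  have hprod : ∀ es : List E,
      (es.map a).prod = (es.map b).prod ↔ (es.map a').prod = (es.map b').prod := fun es => by
    rw [Units.ext_iff, ← Units.coeHom_apply, ← Units.coeHom_apply, map_list_prod, map_list_prod,
      List.map_map, List.map_map]
    rfl
  have hgauge := prod_map_eq_iff_exists_gauge (Finset.coe_subset.2 hIK) hcover a' b'
  simp only [Finset.mem_coe] at hgauge
  simp only [wEntry_prod_eq_iff, hprod, hgauge]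
  exact exists_units_gauge_iff (K : Set V) ha hb
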